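/- arXiv:2309.08884 — 3 statements merged into one kernel-verified Lean document; each statement's English description precedes it below -/
import Mathlib

section
/- Let S be a real random variable with mean S* and standard deviation σ, and let 0 < ε < 1/4. With S̄ = S − S* and Q_q the quantile function of S̄, the truncated expectation satisfies |E[(Q_{2ε}(S̄) − S̄)·1_{S̄ ≤ Q_{2ε}(S̄)}]| ≤ σ√(8ε). -/
/-!
Write `c = Q_{2ε}(S̄)` and `A = {S̄ < c}`, so that `P(A) = 2ε`. The integrand vanishes on
`{S̄ = c}`, hence the integral equals `c·P(A) − E[S̄; A]`. Cauchy–Schwarz bounds `|E[S̄; A]|` by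
`σ√(2ε)`, and Markov's inequality for `S̄²`, applied on `A` if `c < 0` and on `Aᶜ` (of probability
`1 − 2ε ≥ 2ε`) if `c ≥ 0`, gives `c²·2ε ≤ σ²`, i.e. `|c|·2ε ≤ σ√(2ε)`.
-/

open MeasureTheory ProbabilityTheory

namespace MeasureTheory

variable {Ω : Type*} {mΩ : MeasurableSpace Ω} {μ : Measure Ω} {X : Ω → ℝ}

theorem abs_setIntegral_le_sqrt_integral_sq_mul_sqrt_measureReal [IsFiniteMeasure μ]
    (hX : MemLp X 2 μ) (A : Set Ω) :
    |∫ ω in A, X ω ∂μ| ≤ √(∫ ω, X ω ^ 2 ∂μ) * √(μ.real A) := by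
  have hXA : MemLp X (ENNReal.ofReal 2) (μ.restrict A) := by
    simpa using hX.restrict A
  have hOne : MemLp (fun _ ↦ (1 : ℝ)) (ENNReal.ofReal 2) (μ.restrict A) := memLp_const 1
  have holder := integral_mul_norm_le_Lp_mul_Lq Real.HolderConjugate.two_two hXA hOne
  simp only [norm_one, mul_one, one_pow, integral_const, smul_eq_mul,
    measureReal_restrict_apply_univ, Real.norm_eq_abs, Real.rpow_two, sq_abs,
    ← Real.sqrt_eq_rpow] at holder
  calc |∫ ω in A, X ω ∂μ| ≤ ∫ ω in A, |X ω| ∂μ := abs_integral_le_integral_abs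
    _ ≤ √(∫ ω in A, X ω ^ 2 ∂μ) * √(μ.real A) := holder
    _ ≤ √(∫ ω, X ω ^ 2 ∂μ) * √(μ.real A) := by
      gcongr √?_ * _
      exact setIntegral_le_integral hX.integrable_sq (ae_of_all _ fun ω ↦ sq_nonneg (X ω))

theorem sq_mul_min_measureReal_le_integral_sq [IsFiniteMeasure μ] (hX : MemLp X 2 μ) (c : ℝ) :
    c ^ 2 * min (μ.real {ω | X ω < c}) (μ.real {ω | c ≤ X ω}) ≤ ∫ ω, X ω ^ 2 ∂μ := by
  have markov := mul_meas_ge_le_integral_of_nonneg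
    (ae_of_all _ fun ω ↦ sq_nonneg (X ω)) hX.integrable_sq (c ^ 2)
  refine le_trans (mul_le_mul_of_nonneg_left ?_ (sq_nonneg c)) markov
  rcases lt_or_ge c 0 with hc | hc
  · refine (min_le_left _ _).trans (measureReal_mono fun ω hω ↦ ?_)
    have hω : X ω < c := hω
    show c ^ 2 ≤ X ω ^ 2
    nlinarith
  · refine (min_le_right _ _).trans (measureReal_mono fun ω hω ↦ ?_)
    exact pow_le_pow_left₀ hc hω 2

theorem integral_sub_mul_indicator_le [IsFiniteMeasure μ] (hX : Integrable X μ) (c : ℝ) :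
    ∫ ω, (c - X ω) * Set.indicator {ω | X ω ≤ c} (fun _ ↦ (1 : ℝ)) ω ∂μ =
      c * μ.real {ω | X ω < c} - ∫ ω in {ω | X ω < c}, X ω ∂μ := by
  have h_strict : (fun ω ↦ (c - X ω) * Set.indicator {ω | X ω ≤ c} (fun _ ↦ (1 : ℝ)) ω) =
      Set.indicator {ω | X ω < c} (fun ω ↦ c - X ω) := by
    ext ω
    rcases lt_trichotomy (X ω) c with h | h | h
    · simp [h, h.le]
    · simp [h]
    · simp [h.not_ge, h.not_gt]
  rw [h_strict, integral_indicator₀ (nullMeasurableSet_lt hX.aemeasurable aemeasurable_const),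
    integral_sub (integrable_const c) hX.integrableOn, setIntegral_const, smul_eq_mul, mul_comm]

end MeasureTheory

theorem abs_mul_le_mul_sqrt_of_sq_mul_le {c p σ : ℝ} (hp : 0 ≤ p) (hσ : 0 ≤ σ)
    (h : c ^ 2 * p ≤ σ ^ 2) : |c| * p ≤ σ * √p :=
  calc |c| * p = √(c ^ 2 * p) * √p := by
        rw [Real.sqrt_mul (sq_nonneg c), Real.sqrt_sq_eq_abs, mul_assoc, Real.mul_self_sqrt hp]
    _ ≤ √(σ ^ 2) * √p := by gcongr
    _ = σ * √p := by rw [Real.sqrt_sq hσ]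

theorem truncated_expectation_bound_general {Ω : Type*} [MeasureSpace Ω]
    [IsProbabilityMeasure (ℙ : Measure Ω)]
    (S : Ω → ℝ) (hS2 : MemLp S 2 ℙ)
    (Sstar σ ε : ℝ) (hσ0 : 0 ≤ σ) (hε0 : 0 < ε) (hε : ε < 1/4)
    (hmean : ∫ ω, S ω ∂ℙ = Sstar)
    (hvar : variance S ℙ = σ^2)
    (Q : ℝ → ℝ)
    (hQprob : ∀ q, 0 < q → q < 1 →
      (ℙ {ω | S ω - Sstar ≥ Q q}).toReal = 1 - q) :
    |∫ ω, (Q (2*ε) - (S ω - Sstar)) *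
        Set.indicator {ω | S ω - Sstar ≤ Q (2*ε)} (fun _ => (1:ℝ)) ω ∂ℙ| ≤
      σ * Real.sqrt (8*ε) := by
  set c := Q (2 * ε)
  set X : Ω → ℝ := fun ω ↦ S ω - Sstar
  have hX : MemLp X 2 ℙ := hS2.sub (memLp_const Sstar)
  have h_second_moment : ∫ ω, X ω ^ 2 ∂ℙ = σ ^ 2 := by
    rw [← hvar, variance_eq_integral hS2.aemeasurable, hmean]
  have h_upper : (ℙ : Measure Ω).real {ω | c ≤ X ω} = 1 - 2 * ε :=
    hQprob (2 * ε) (by linarith) (by linarith)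
  have h_lower : (ℙ : Measure Ω).real {ω | X ω < c} = 2 * ε := by
    have hcompl : {ω | X ω < c} = {ω | c ≤ X ω}ᶜ := by ext; simp
    rw [hcompl, probReal_compl_eq_one_sub₀
      (nullMeasurableSet_le aemeasurable_const hX.aemeasurable), h_upper]
    ring
  have h_quantile : c ^ 2 * (2 * ε) ≤ σ ^ 2 := by
    have := sq_mul_min_measureReal_le_integral_sq hX c
    rwa [h_lower, h_upper, min_eq_left (by linarith), h_second_moment] at this
  have h_cauchy_schwarz : |∫ ω in {ω | X ω < c}, X ω| ≤ σ * √(2 * ε) := by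
    have := abs_setIntegral_le_sqrt_integral_sq_mul_sqrt_measureReal hX {ω | X ω < c}
    rwa [h_second_moment, h_lower, Real.sqrt_sq hσ0] at this
  have h_const := abs_mul_le_mul_sqrt_of_sq_mul_le (by linarith) hσ0 h_quantile
  rw [integral_sub_mul_indicator_le (hX.integrable one_le_two) c, h_lower,
    show 8 * ε = 2 ^ 2 * (2 * ε) by ring, Real.sqrt_mul (by norm_num), Real.sqrt_sq two_pos.le]
  calc |c * (2 * ε) - ∫ ω in {ω | X ω < c}, X ω|
      ≤ |c * (2 * ε)| + |∫ ω in {ω | X ω < c}, X ω| := abs_sub _ _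
    _ = |c| * (2 * ε) + |∫ ω in {ω | X ω < c}, X ω| := by
        rw [abs_mul, abs_of_pos (by linarith : (0 : ℝ) < 2 * ε)]
    _ ≤ σ * (2 * √(2 * ε)) := by linarith

/-- Bound on the lower truncated expectation:
|E[(Q_{2ε}(S̄) − S̄)·1_{S̄ ≤ Q_{2ε}(S̄)}]| ≤ σ√(8ε). -/
theorem truncated_expectation_bound {Ω : Type*} [MeasureSpace Ω]
    [IsProbabilityMeasure (ℙ : Measure Ω)]
    (S : Ω → ℝ) (hS : Measurable S) (hS2 : MemLp S 2 ℙ)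
    (Sstar σ ε : ℝ) (hσ0 : 0 ≤ σ) (hε0 : 0 < ε) (hε : ε < 1/4)
    (hmean : ∫ ω, S ω ∂ℙ = Sstar)
    (hvar : variance S ℙ = σ^2)
    (Q : ℝ → ℝ)
    (hQdef : ∀ q, 0 < q → q < 1 →
      Q q = sSup {M : ℝ | (1 - q) ≤ (ℙ {ω | S ω - Sstar ≥ M}).toReal})
    (hQprob : ∀ q, 0 < q → q < 1 →
      (ℙ {ω | S ω - Sstar ≥ Q q}).toReal = 1 - q) :
    |∫ ω, (Q (2*ε) - (S ω - Sstar)) *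
        Set.indicator {ω | S ω - Sstar ≤ Q (2*ε)} (fun _ => (1:ℝ)) ω ∂ℙ| ≤
      σ * Real.sqrt (8*ε) :=
  truncated_expectation_bound_general S hS2 Sstar σ ε hσ0 hε0 hε hmean hvar Q hQprob
end

section
/- Let S be a real random variable with mean S*, standard deviation σ, and let 0 < ε < 1/4. Define trimming thresholds α, β with Q_{ε/2}(S̄) ≤ α − S* ≤ Q_{2ε}(S̄) and Q_{1−2ε}(S̄) ≤ β − S* ≤ Q_{1−ε/2}(S̄), where S̄ = S − S*. Let φ_{α,β}(s) = β if s > β, s if α ≤ s ≤ β, α if s < α. Then |E[φ_{α,β}(S)] − S*| ≤ σ√(8ε). -/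
/-!
Since `max α (min s β) = s + (α - s)⁺ - (s - β)⁺`, the bias is a difference of two nonnegative
tail integrals. The quantile conditions give each tail event probability `p ≤ 2ε ≤ 1/2`, so its
threshold lies beyond a median, which Chebyshev places within `σ√2` of the mean. Cauchy–Schwarz
on the tail event then bounds each tail integral by `2σ√p ≤ σ√(8ε)`.
-/

open MeasureTheory ProbabilityTheory

theorem max_min_eq_add_max_sub_max {a b : ℝ} (hab : a ≤ b) (s : ℝ) :
    max a (min s b) = s + max (a - s) 0 - max (s - b) 0 := by
  simp only [max_def, min_def]
  split_ifs <;> linarith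

namespace MeasureTheory

variable {Ω : Type*} [MeasurableSpace Ω] {μ : Measure Ω} {X : Ω → ℝ}

section FiniteMeasure

variable [IsFiniteMeasure μ]

theorem integral_max_min_eq (hX : Integrable X μ) {a b : ℝ} (hab : a ≤ b) :
    ∫ ω, max a (min (X ω) b) ∂μ =
      ∫ ω, X ω ∂μ + ∫ ω, max (a - X ω) 0 ∂μ - ∫ ω, max (X ω - b) 0 ∂μ := by
  have hbelow : Integrable (fun ω => max (a - X ω) 0) μ := ((integrable_const a).sub hX).pos_part
  have habove : Integrable (fun ω => max (X ω - b) 0) μ := (hX.sub (integrable_const b)).pos_part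
  simp_rw [max_min_eq_add_max_sub_max hab]
  rw [integral_sub (f := fun ω => X ω + max (a - X ω) 0) (hX.add hbelow) habove,
    integral_add hX hbelow]

theorem setIntegral_abs_le_sqrt_integral_sq_mul_sqrt (hX : MemLp X 2 μ) (A : Set Ω) :
    ∫ ω in A, |X ω| ∂μ ≤ √(∫ ω, X ω ^ 2 ∂μ) * √(μ.real A) := by
  have hHolder := integral_mul_le_Lp_mul_Lq_of_nonneg (μ := μ.restrict A)
    Real.HolderConjugate.two_two (ae_of_all _ fun ω => abs_nonneg (X ω))
    (ae_of_all _ fun _ => zero_le_one)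
    (by rw [ENNReal.ofReal_ofNat]; exact hX.abs.restrict A)
    (by rw [ENNReal.ofReal_ofNat]; exact memLp_const 1)
  simp only [one_pow, mul_one, integral_const, smul_eq_mul, measureReal_restrict_apply_univ,
    Real.rpow_two, sq_abs, ← Real.sqrt_eq_rpow] at hHolder
  refine hHolder.trans (mul_le_mul_of_nonneg_right (Real.sqrt_le_sqrt ?_) (Real.sqrt_nonneg _))
  exact setIntegral_le_integral hX.integrable_sq (ae_of_all _ fun ω => sq_nonneg (X ω))

end FiniteMeasure

variable [IsProbabilityMeasure μ]

theorem sub_le_sqrt_two_mul_integral_sq_of_half_le (hX : MemLp X 2 μ) {m b : ℝ}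
    (hb : 1 / 2 ≤ μ.real {ω | X ω ≤ b}) : m - b ≤ √(2 * ∫ ω, (X ω - m) ^ 2 ∂μ) := by
  rcases le_or_gt (m - b) 0 with hmb | hmb
  · exact hmb.trans (Real.sqrt_nonneg _)
  have hMarkov := mul_meas_ge_le_integral_of_nonneg (ae_of_all _ fun ω => sq_nonneg (X ω - m))
    (hX.sub (memLp_const m)).integrable_sq ((m - b) ^ 2)
  have hsub : μ.real {ω | X ω ≤ b} ≤ μ.real {ω | (m - b) ^ 2 ≤ (X ω - m) ^ 2} :=
    measureReal_mono fun ω (h : X ω ≤ b) =>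
      (pow_le_pow_left₀ hmb.le (show m - b ≤ m - X ω by linarith) 2).trans_eq (by ring)
  rw [Real.le_sqrt hmb.le (by positivity)]
  nlinarith

theorem integral_max_sub_const_zero_le (hXm : Measurable X) (hX : MemLp X 2 μ) {m b : ℝ}
    (hb : μ.real {ω | b < X ω} ≤ 1 / 2) :
    ∫ ω, max (X ω - b) 0 ∂μ ≤ 2 * √(∫ ω, (X ω - m) ^ 2 ∂μ) * √(μ.real {ω | b < X ω}) := by
  set A := {ω | b < X ω}
  set v := ∫ ω, (X ω - m) ^ 2 ∂μ
  set p := μ.real A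
  have hA : MeasurableSet A := measurableSet_lt measurable_const hXm
  have hp : 0 ≤ p := measureReal_nonneg
  have hXc : MemLp (fun ω => X ω - m) 2 μ := hX.sub (memLp_const m)
  have hposPart : (fun ω => max (X ω - b) 0) = A.indicator fun ω => (X ω - m) + (m - b) := by
    ext ω
    by_cases h : b < X ω
    · simp [A, h, h.le]
    · simp [A, h, not_lt.mp h]
  have hcentered : ∫ ω in A, (X ω - m) ∂μ ≤ √v * √p :=
    (setIntegral_mono (hXc.integrable one_le_two).integrableOn
      (hXc.integrable one_le_two).abs.integrableOn fun ω => le_abs_self _).trans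
      (setIntegral_abs_le_sqrt_integral_sq_mul_sqrt hXc A)
  have hshift : (m - b) * p ≤ √v * √p := by
    have hcompl : {ω | X ω ≤ b} = Aᶜ := by ext; simp [A]
    have hthreshold : m - b ≤ √2 * √v := by
      rw [← Real.sqrt_mul zero_le_two]
      exact sub_le_sqrt_two_mul_integral_sq_of_half_le hX
        (by rw [hcompl, probReal_compl_eq_one_sub hA]; linarith)
    have hsmall : √2 * p ≤ √p := by
      rw [Real.le_sqrt (by positivity) hp, mul_pow, Real.sq_sqrt zero_le_two]
      nlinarith
    calc (m - b) * p ≤ √2 * √v * p := mul_le_mul_of_nonneg_right hthreshold hp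
      _ = √v * (√2 * p) := by ring
      _ ≤ √v * √p := mul_le_mul_of_nonneg_left hsmall (Real.sqrt_nonneg v)
  calc ∫ ω, max (X ω - b) 0 ∂μ = ∫ ω in A, (X ω - m) + (m - b) ∂μ := by
        rw [hposPart, integral_indicator hA]
    _ = ∫ ω in A, (X ω - m) ∂μ + (m - b) * p := by
        rw [integral_add (hXc.integrable one_le_two).integrableOn (integrable_const _),
          setIntegral_const, smul_eq_mul, mul_comm]
    _ ≤ 2 * √v * √p := by linarith

theorem integral_max_const_sub_zero_le (hXm : Measurable X) (hX : MemLp X 2 μ) {m a : ℝ}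
    (ha : μ.real {ω | X ω < a} ≤ 1 / 2) :
    ∫ ω, max (a - X ω) 0 ∂μ ≤ 2 * √(∫ ω, (X ω - m) ^ 2 ∂μ) * √(μ.real {ω | X ω < a}) := by
  have hneg := integral_max_sub_const_zero_le (m := -m) (b := -a) hXm.neg hX.neg
    (by simpa using ha)
  simpa only [Pi.neg_apply, neg_lt_neg_iff, sub_neg_eq_add, neg_add_eq_sub, sub_sq_comm m]
    using hneg

theorem abs_integral_max_min_sub_integral_le (hXm : Measurable X) (hX : MemLp X 2 μ)
    {a b r : ℝ} (hab : a ≤ b) (hr : r ≤ 1 / 2) (ha : μ.real {ω | X ω < a} ≤ r)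
    (hb : μ.real {ω | b < X ω} ≤ r) :
    |∫ ω, max a (min (X ω) b) ∂μ - μ[X]| ≤ 2 * √(variance X μ) * √r := by
  have hv : ∫ ω, (X ω - μ[X]) ^ 2 ∂μ = variance X μ :=
    (variance_eq_integral hXm.aemeasurable).symm
  have hbelow := integral_max_const_sub_zero_le (m := μ[X]) hXm hX (ha.trans hr)
  have habove := integral_max_sub_const_zero_le (m := μ[X]) hXm hX (hb.trans hr)
  rw [hv] at hbelow habove
  have hsqrt_mono : ∀ {p}, p ≤ r → 2 * √(variance X μ) * √p ≤ 2 * √(variance X μ) * √r :=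
    fun hp => by gcongr
  rw [integral_max_min_eq (hX.integrable one_le_two) hab, add_sub_assoc, add_sub_cancel_left]
  exact abs_sub_le_of_nonneg_of_le (integral_nonneg fun _ => le_max_right _ _)
    (hbelow.trans (hsqrt_mono ha)) (integral_nonneg fun _ => le_max_right _ _)
    (habove.trans (hsqrt_mono hb))

end MeasureTheory

theorem trimmed_mean_bias_bound_general {Ω : Type*} [MeasureSpace Ω]
    [IsProbabilityMeasure (ℙ : Measure Ω)]
    (S : Ω → ℝ) (hS : Measurable S) (hS2 : MemLp S 2 ℙ)
    (Sstar σ ε α β : ℝ) (hσ0 : 0 ≤ σ) (hε0 : 0 < ε) (hε : ε < 1/4) (hαβ : α ≤ β)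
    (hmean : ∫ ω, S ω ∂ℙ = Sstar)
    (hvar : variance S ℙ = σ^2)
    (Q : ℝ → ℝ)
    (hQprob : ∀ q, 0 < q → q < 1 →
      (ℙ {ω | S ω - Sstar ≥ Q q}).toReal = 1 - q)
    (hα : Q (ε/2) ≤ α - Sstar ∧ α - Sstar ≤ Q (2*ε))
    (hβ : Q (1 - 2*ε) ≤ β - Sstar ∧ β - Sstar ≤ Q (1 - ε/2))
    (φ : ℝ → ℝ) (hφ : ∀ s, φ s = if s > β then β else if s < α then α else s) :
    |(∫ ω, φ (S ω) ∂ℙ) - Sstar| ≤ σ * Real.sqrt (8*ε) := by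
  have hclamp : ∀ s, φ s = max α (min s β) := fun s => by
    rw [hφ]; simp only [max_def, min_def]; split_ifs <;> linarith
  have hupper : (ℙ).real {ω | β < S ω} ≤ 2 * ε := by
    have hQ := hQprob (1 - 2 * ε) (by linarith) (by linarith)
    calc (ℙ).real {ω | β < S ω} ≤ (ℙ).real {ω | S ω - Sstar ≥ Q (1 - 2 * ε)} :=
          measureReal_mono fun ω (h : β < S ω) => by
            show Q (1 - 2 * ε) ≤ S ω - Sstar; linarith [hβ.1]
      _ = 2 * ε := by rw [measureReal_def, hQ]; ring
  have hlower : (ℙ).real {ω | S ω < α} ≤ 2 * ε := by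
    have hQ := hQprob (2 * ε) (by linarith) (by linarith)
    have hcompl : {ω | S ω < α} = {ω | α ≤ S ω}ᶜ := by ext; simp
    calc (ℙ).real {ω | S ω < α} = 1 - (ℙ).real {ω | α ≤ S ω} := by
          rw [hcompl, probReal_compl_eq_one_sub (measurableSet_le measurable_const hS)]
      _ ≤ 1 - (ℙ).real {ω | S ω - Sstar ≥ Q (2 * ε)} := by
          gcongr 1 - ?_
          exact measureReal_mono fun ω (h : Q (2 * ε) ≤ S ω - Sstar) => by
            show α ≤ S ω; linarith [hα.2]
      _ = 2 * ε := by rw [measureReal_def, hQ]; ring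
  simp_rw [hclamp, ← hmean]
  calc _ ≤ 2 * √(variance S ℙ) * √(2 * ε) :=
        abs_integral_max_min_sub_integral_le hS hS2 hαβ (by linarith) hlower hupper
    _ = σ * Real.sqrt (8 * ε) := by
        rw [hvar, Real.sqrt_sq hσ0, show 8 * ε = 2 ^ 2 * (2 * ε) by ring,
          Real.sqrt_mul' (2 ^ 2) (by linarith), Real.sqrt_sq zero_le_two]
        ring

/-- The expected trimmed value deviates from the true mean by at most σ√(8ε). -/
theorem trimmed_mean_bias_bound {Ω : Type*} [MeasureSpace Ω]
    [IsProbabilityMeasure (ℙ : Measure Ω)]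
    (S : Ω → ℝ) (hS : Measurable S) (hS2 : MemLp S 2 ℙ)
    (Sstar σ ε α β : ℝ) (hσ0 : 0 ≤ σ) (hε0 : 0 < ε) (hε : ε < 1/4) (hαβ : α ≤ β)
    (hmean : ∫ ω, S ω ∂ℙ = Sstar)
    (hvar : variance S ℙ = σ^2)
    (Q : ℝ → ℝ)
    (hQdef : ∀ q, 0 < q → q < 1 →
      Q q = sSup {M : ℝ | (1 - q) ≤ (ℙ {ω | S ω - Sstar ≥ M}).toReal})
    (hQprob : ∀ q, 0 < q → q < 1 →
      (ℙ {ω | S ω - Sstar ≥ Q q}).toReal = 1 - q)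
    (hα : Q (ε/2) ≤ α - Sstar ∧ α - Sstar ≤ Q (2*ε))
    (hβ : Q (1 - 2*ε) ≤ β - Sstar ∧ β - Sstar ≤ Q (1 - ε/2))
    (φ : ℝ → ℝ) (hφ : ∀ s, φ s = if s > β then β else if s < α then α else s) :
    |(∫ ω, φ (S ω) ∂ℙ) - Sstar| ≤ σ * Real.sqrt (8*ε) :=
  trimmed_mean_bias_bound_general S hS hS2 Sstar σ ε α β hσ0 hε0 hε hαβ hmean hvar Q hQprob hα hβ φ
    hφ
end

section
/- Under the assumptions of the previous statement (trimming thresholds α, β satisfying the quantile sandwich bounds, 0 < ε < 1/4), every point value of the trimmed variable satisfies |φ_{α,β}(s) − E[φ_{α,β}(S)]| ≤ σ/√(ε/2) + σ√(8ε) for all s ∈ ℝ. -/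
/-!
Put `X = S - S*`, so that `E[X²] = σ²`. Since `φ` takes values in `[α, β]`,
`φ(s) - E[φ(S)] ≤ (β - S*) + E[(S - β)⁺]`, and symmetrically from below with `S* - α` and
`E[(α - S)⁺]`. Chebyshev's inequality at the quantile `Q_{1-ε/2}`, whose upper tail has mass
`ε/2`, gives `β - S* ≤ σ / √(ε/2)`. For the tail term, with `b = β - S*` and `A = {X > b}`,
`E[(X - b)⁺] = E[X; A] - b P(A)`, and `P(A) ≤ 2ε` because `b ≥ Q_{1-2ε}`. Cauchy–Schwarz bounds
`E[X; A]` by `σ √(2ε)`; if `b < 0`, Chebyshev on `{X ≤ b}`, of mass at least `1 - 2ε`, gives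
`-b ≤ σ / √(1 - 2ε)`, so `-b P(A) ≤ 2ε σ / √(1 - 2ε) ≤ σ √(2ε)` as `ε ≤ 1/4`.
-/

open MeasureTheory ProbabilityTheory

section
variable {Ω : Type*} [MeasurableSpace Ω] {μ : Measure Ω} {X : Ω → ℝ} {σ : ℝ}

theorem setIntegral_le_mul_sqrt_measureReal [IsFiniteMeasure μ] (hX : MemLp X 2 μ)
    (hσ : 0 ≤ σ) (h2 : ∫ ω, X ω ^ 2 ∂μ ≤ σ ^ 2) (A : Set Ω) :
    ∫ ω in A, X ω ∂μ ≤ σ * √(μ.real A) := by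
  have hX' : MemLp (fun ω => |X ω|) 2 (μ.restrict A) := hX.abs.restrict A
  have hXA : ∫ ω in A, X ω ^ 2 ∂μ ≤ σ ^ 2 :=
    (setIntegral_le_integral hX.integrable_sq (.of_forall fun ω => sq_nonneg _)).trans h2
  calc ∫ ω in A, X ω ∂μ ≤ ∫ ω in A, |X ω| * 1 ∂μ :=
        integral_mono (hX.integrable one_le_two).integrableOn
          ((hX'.integrable one_le_two).mul_const 1) fun ω => by simpa using le_abs_self (X ω)
    _ ≤ (∫ ω in A, |X ω| ^ (2 : ℝ) ∂μ) ^ (1 / 2 : ℝ) *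
          (∫ ω in A, (1 : ℝ) ^ (2 : ℝ) ∂μ) ^ (1 / 2 : ℝ) :=
        integral_mul_le_Lp_mul_Lq_of_nonneg .two_two (.of_forall fun ω => abs_nonneg _)
          (.of_forall fun _ => zero_le_one) (by simpa using hX') (memLp_const 1)
    _ = √(∫ ω in A, X ω ^ 2 ∂μ) * √(μ.real A) := by
        simp [Real.sqrt_eq_rpow]
    _ ≤ √(σ ^ 2) * √(μ.real A) := by gcongr
    _ = σ * √(μ.real A) := by rw [Real.sqrt_sq hσ]

theorem le_div_sqrt_of_le_measureReal_le_abs [IsFiniteMeasure μ] (hX : MemLp X 2 μ)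
    (hσ : 0 ≤ σ) (h2 : ∫ ω, X ω ^ 2 ∂μ ≤ σ ^ 2) {c p : ℝ} (hp : 0 < p)
    (hc : p ≤ μ.real {ω | c ≤ |X ω|}) : c ≤ σ / √p := by
  rcases le_or_gt c 0 with hc0 | hc0
  · exact hc0.trans (by positivity)
  have markov := mul_meas_ge_le_integral_of_nonneg (.of_forall fun ω => sq_nonneg (X ω))
    hX.integrable_sq (c ^ 2)
  have hsub : {ω | c ≤ |X ω|} ⊆ {ω | c ^ 2 ≤ X ω ^ 2} := fun ω hω => by
    simpa [sq_abs] using pow_le_pow_left₀ hc0.le hω 2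
  have hcp : c ^ 2 * p ≤ σ ^ 2 := by
    calc c ^ 2 * p ≤ c ^ 2 * μ.real {ω | c ^ 2 ≤ X ω ^ 2} := by
          gcongr
          exact hc.trans (measureReal_mono hsub)
      _ ≤ σ ^ 2 := markov.trans h2
  rw [le_div_iff₀ (Real.sqrt_pos.2 hp)]
  calc c * √p = √(c ^ 2 * p) := by rw [Real.sqrt_mul (by positivity), Real.sqrt_sq hc0.le]
    _ ≤ √(σ ^ 2) := Real.sqrt_le_sqrt hcp
    _ = σ := Real.sqrt_sq hσ

theorem le_div_sqrt_of_le_measureReal_le [IsFiniteMeasure μ] (hX : MemLp X 2 μ)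
    (hσ : 0 ≤ σ) (h2 : ∫ ω, X ω ^ 2 ∂μ ≤ σ ^ 2) {c p : ℝ} (hp : 0 < p)
    (hc : p ≤ μ.real {ω | c ≤ X ω}) : c ≤ σ / √p :=
  le_div_sqrt_of_le_measureReal_le_abs hX hσ h2 hp <|
    hc.trans <| measureReal_mono fun ω (hω : c ≤ X ω) => hω.trans (le_abs_self _)

theorem neg_le_div_sqrt_of_le_measureReal_lt [IsFiniteMeasure μ] (hX : MemLp X 2 μ)
    (hσ : 0 ≤ σ) (h2 : ∫ ω, X ω ^ 2 ∂μ ≤ σ ^ 2) {c p : ℝ} (hp : 0 < p)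
    (hc : p ≤ μ.real {ω | X ω < c}) : -c ≤ σ / √p :=
  le_div_sqrt_of_le_measureReal_le_abs hX hσ h2 hp <|
    hc.trans <| measureReal_mono fun ω (hω : X ω < c) =>
      (by linarith [neg_abs_le (X ω)] : -c ≤ |X ω|)

theorem measureReal_lt_eq_one_sub [IsProbabilityMeasure μ] (hX : AEMeasurable X μ) (c : ℝ) :
    μ.real {ω | X ω < c} = 1 - μ.real {ω | c ≤ X ω} := by
  rw [← probReal_compl_eq_one_sub₀ (nullMeasurableSet_le aemeasurable_const hX)]
  congr 1
  ext ω
  simp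

theorem integral_max_sub_zero_le [IsProbabilityMeasure μ] (hX : MemLp X 2 μ)
    (hσ : 0 ≤ σ) (h2 : ∫ ω, X ω ^ 2 ∂μ ≤ σ ^ 2) {b p : ℝ} (hp : p ≤ 1 / 2)
    (hb : μ.real {ω | b < X ω} ≤ p) : ∫ ω, max (X ω - b) 0 ∂μ ≤ 2 * σ * √p := by
  set A := {ω | b < X ω}
  have hA : NullMeasurableSet A μ :=
    nullMeasurableSet_lt aemeasurable_const hX.aestronglyMeasurable.aemeasurable
  have hp0 : 0 ≤ p := measureReal_nonneg.trans hb
  have hsplit : ∫ ω, max (X ω - b) 0 ∂μ = ∫ ω in A, X ω ∂μ - μ.real A * b := by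
    have hind : (fun ω => max (X ω - b) 0) = A.indicator fun ω => X ω - b := by
      ext ω
      by_cases hω : b < X ω
      · simp [A, hω, hω.le]
      · simp [A, hω, not_lt.1 hω]
    have hXA : IntegrableOn X A μ := (hX.integrable one_le_two).integrableOn
    rw [hind, integral_indicator₀ hA, integral_sub hXA (integrableOn_const (measure_ne_top μ A)),
      setIntegral_const, smul_eq_mul]
  have hmain : ∫ ω in A, X ω ∂μ ≤ σ * √p :=
    (setIntegral_le_mul_sqrt_measureReal hX hσ h2 A).trans (by gcongr)
  have hshift : -b * μ.real A ≤ σ * √p := by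
    rcases le_or_gt 0 b with hb0 | hb0
    · nlinarith [measureReal_nonneg (μ := μ) (s := A), Real.sqrt_nonneg p]
    have hcompl : 1 - p ≤ μ.real {ω | -b ≤ |X ω|} := by
      calc 1 - p ≤ μ.real Aᶜ := by rw [probReal_compl_eq_one_sub₀ hA]; linarith
        _ ≤ μ.real {ω | -b ≤ |X ω|} := measureReal_mono fun ω hω => by
          simp only [A, Set.mem_compl_iff, Set.mem_ofPred_eq, not_lt] at hω ⊢
          linarith [neg_abs_le (X ω)]
    have hb' := le_div_sqrt_of_le_measureReal_le_abs hX hσ h2 (by linarith) hcompl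
    have hq : p / √(1 - p) ≤ √p := by
      rw [div_le_iff₀ (Real.sqrt_pos.2 (by linarith))]
      calc p = √p * √p := (Real.mul_self_sqrt hp0).symm
        _ ≤ √p * √(1 - p) := by gcongr; linarith
    calc -b * μ.real A ≤ σ / √(1 - p) * p := mul_le_mul hb' hb measureReal_nonneg (by positivity)
      _ = σ * (p / √(1 - p)) := by ring
      _ ≤ σ * √p := by gcongr
  linarith

theorem abs_clip_sub_integral_le [IsFiniteMeasure μ] {S : Ω → ℝ} (hS : Integrable S μ)
    {α β a u : ℝ} (hαβ : α ≤ β) (hβ : β - ∫ ω, S ω ∂μ ≤ a) (hα : ∫ ω, S ω ∂μ - α ≤ a)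
    (huβ : ∫ ω, max (S ω - β) 0 ∂μ ≤ u) (huα : ∫ ω, max (α - S ω) 0 ∂μ ≤ u) (x : ℝ) :
    |max α (min x β) - ∫ ω, max α (min (S ω) β) ∂μ| ≤ a + u := by
  have hY : Integrable (fun ω => max α (min (S ω) β)) μ :=
    (integrable_const α).sup (hS.inf (integrable_const β))
  have hU : Integrable (fun ω => max (S ω - β) 0) μ :=
    (hS.sub (integrable_const β)).sup (integrable_zero _ _ _)
  have hV : Integrable (fun ω => max (α - S ω) 0) μ :=
    ((integrable_const α).sub hS).sup (integrable_zero _ _ _)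
  have hup : ∫ ω, S ω - max (S ω - β) 0 ∂μ ≤ ∫ ω, max α (min (S ω) β) ∂μ :=
    integral_mono (hS.sub hU) hY fun ω => by grind
  have hlow : ∫ ω, max α (min (S ω) β) ∂μ ≤ ∫ ω, S ω + max (α - S ω) 0 ∂μ :=
    integral_mono hY (hS.add hV) fun ω => by grind
  rw [integral_sub hS hU] at hup
  rw [integral_add hS hV] at hlow
  rw [abs_sub_le_iff]
  constructor <;> linarith [le_max_left α (min x β), max_le hαβ (min_le_right x β)]
end
theorem trimmed_value_pointwise_bound_general {Ω : Type*} [MeasureSpace Ω]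
    [IsProbabilityMeasure (ℙ : Measure Ω)]
    (S : Ω → ℝ) (hS2 : MemLp S 2 ℙ)
    (Sstar σ ε α β : ℝ) (hσ0 : 0 ≤ σ) (hε0 : 0 < ε) (hε : ε < 1/4) (hαβ : α ≤ β)
    (hmean : ∫ ω, S ω ∂ℙ = Sstar)
    (hvar : variance S ℙ = σ^2)
    (Q : ℝ → ℝ)
    (hQprob : ∀ q, 0 < q → q < 1 →
      (ℙ {ω | S ω - Sstar ≥ Q q}).toReal = 1 - q)
    (hα : Q (ε/2) ≤ α - Sstar ∧ α - Sstar ≤ Q (2*ε))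
    (hβ : Q (1 - 2*ε) ≤ β - Sstar ∧ β - Sstar ≤ Q (1 - ε/2))
    (φ : ℝ → ℝ) (hφ : ∀ s, φ s = if s > β then β else if s < α then α else s) :
    ∀ s : ℝ, |φ s - ∫ ω, φ (S ω) ∂ℙ| ≤
      σ / Real.sqrt (ε/2) + σ * Real.sqrt (8*ε) := by
  obtain rfl : φ = fun x => max α (min x β) := funext fun x => by rw [hφ]; split_ifs <;> grind
  set X := fun ω => S ω - Sstar
  have hX : MemLp X 2 ℙ := hS2.sub (memLp_const Sstar)
  have hX2 : ∫ ω, X ω ^ 2 ∂ℙ ≤ σ ^ 2 := by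
    rw [← hvar, variance_eq_integral hS2.aestronglyMeasurable.aemeasurable, hmean]
  have hnegX2 : ∫ ω, (-X) ω ^ 2 ∂ℙ ≤ σ ^ 2 := by simpa using hX2
  have hQge : ∀ q, 0 < q → q < 1 → (ℙ : Measure Ω).real {ω | Q q ≤ X ω} = 1 - q := hQprob
  have hQlt : ∀ q, 0 < q → q < 1 → (ℙ : Measure Ω).real {ω | X ω < Q q} = q := by
    intro q hq0 hq1
    rw [measureReal_lt_eq_one_sub hX.aestronglyMeasurable.aemeasurable, hQge q hq0 hq1]; ring
  have h8 : √(8 * ε) = 2 * √(2 * ε) := by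
    rw [show (8 : ℝ) * ε = 2 ^ 2 * (2 * ε) by ring, Real.sqrt_mul (by positivity),
      Real.sqrt_sq zero_le_two]
  intro s
  refine abs_clip_sub_integral_le (hS2.integrable one_le_two) hαβ ?_ ?_ ?_ ?_ s
  · rw [hmean]
    refine hβ.2.trans (le_div_sqrt_of_le_measureReal_le hX hσ0 hX2 (by positivity) ?_)
    rw [hQge _ (by linarith) (by linarith)]; linarith
  · rw [hmean]
    linarith [hα.1, neg_le_div_sqrt_of_le_measureReal_lt hX hσ0 hX2 (by positivity)
      (hQlt (ε / 2) (by linarith) (by linarith)).ge]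
  · have hp : (ℙ : Measure Ω).real {ω | β - Sstar < X ω} ≤ 2 * ε := by
      calc _ ≤ (ℙ : Measure Ω).real {ω | Q (1 - 2 * ε) ≤ X ω} :=
            measureReal_mono fun ω hω => hβ.1.trans (le_of_lt hω)
        _ = 2 * ε := by rw [hQge _ (by linarith) (by linarith)]; ring
    have := integral_max_sub_zero_le hX hσ0 hX2 (by linarith) hp
    simp only [X, sub_sub_sub_cancel_right] at this
    rw [h8]; linarith
  · have hp : (ℙ : Measure Ω).real {ω | Sstar - α < (-X) ω} ≤ 2 * ε := by
      calc _ ≤ (ℙ : Measure Ω).real {ω | X ω < Q (2 * ε)} :=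
            measureReal_mono fun ω (hω : Sstar - α < -X ω) => (by linarith [hα.2] : X ω < _)
        _ = 2 * ε := hQlt _ (by linarith) (by linarith)
    have := integral_max_sub_zero_le hX.neg hσ0 hnegX2 (by linarith) hp
    simp only [X, Pi.neg_apply, neg_sub, sub_sub_sub_cancel_left] at this
    rw [h8]; linarith

/-- Pointwise bound on the trimmed variable around its expectation:
|φ_{α,β}(s) − E[φ_{α,β}(S)]| ≤ σ/√(ε/2) + σ√(8ε). -/
theorem trimmed_value_pointwise_bound {Ω : Type*} [MeasureSpace Ω]
    [IsProbabilityMeasure (ℙ : Measure Ω)]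
    (S : Ω → ℝ) (hS : Measurable S) (hS2 : MemLp S 2 ℙ)
    (Sstar σ ε α β : ℝ) (hσ0 : 0 ≤ σ) (hε0 : 0 < ε) (hε : ε < 1/4) (hαβ : α ≤ β)
    (hmean : ∫ ω, S ω ∂ℙ = Sstar)
    (hvar : variance S ℙ = σ^2)
    (Q : ℝ → ℝ)
    (hQdef : ∀ q, 0 < q → q < 1 →
      Q q = sSup {M : ℝ | (1 - q) ≤ (ℙ {ω | S ω - Sstar ≥ M}).toReal})
    (hQprob : ∀ q, 0 < q → q < 1 →
      (ℙ {ω | S ω - Sstar ≥ Q q}).toReal = 1 - q)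
    (hα : Q (ε/2) ≤ α - Sstar ∧ α - Sstar ≤ Q (2*ε))
    (hβ : Q (1 - 2*ε) ≤ β - Sstar ∧ β - Sstar ≤ Q (1 - ε/2))
    (φ : ℝ → ℝ) (hφ : ∀ s, φ s = if s > β then β else if s < α then α else s) :
    ∀ s : ℝ, |φ s - ∫ ω, φ (S ω) ∂ℙ| ≤
      σ / Real.sqrt (ε/2) + σ * Real.sqrt (8*ε) :=
  trimmed_value_pointwise_bound_general S hS2 Sstar σ ε α β hσ0 hε0 hε hαβ hmean hvar Q hQprob hα hβ
    φ hφ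
end
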